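/- Let Φ := Φ_{B_n} on t := ℂ^n and fix A_1,…,A_p ∈ ℂ^n, with associated universal deformation space B_Q ⊆ (ℂ^n)^p. Then there exist finite families of natural numbers (a_1,…,a_u) and (b_1,…,b_v) such that π₁(B_Q, (A_1,…,A_p)) ≅ ∏_{j=1}^{u} PB_{a_j} × ∏_{k=1}^{v} PB^{BC}_{b_k}; that is, every pure local wild mapping class group of type B is a finite product of pure braid groups of types A and B/C. -/

import Mathlib

/-- The coordinate functional `α_i : ℂ^n → ℂ`. -/
noncomputable def prj (n : ℕ) (i : Fin n) : (Fin n → ℂ) →ₗ[ℂ] ℂ :=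
  LinearMap.proj i

/-- The ordered configuration space of `k` points in `ℂ`; its fundamental group is the pure
braid group `PB_k`. -/
abbrev Conf (k : ℕ) : Type := {f : Fin k → ℂ // Function.Injective f}

/-- The type-`B_k/C_k` root-hyperplane complement; its fundamental group is the type-B/C
pure braid group `PB^{BC}_k`. -/
abbrev XBC (k : ℕ) : Type :=
  {z : Fin k → ℂ // (∀ i, z i ≠ 0) ∧ ∀ i j, i ≠ j → z i ≠ z j ∧ z i ≠ -z j}

noncomputable section
open CategoryTheory


def autMulEquivOfStrictIso {C D : Type*} [Category C] [Category D] (F : C ⥤ D) (G : D ⥤ C)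
    (h1 : F ⋙ G = 𝟭 C) (h2 : G ⋙ F = 𝟭 D) (x : C) : Aut x ≃* Aut (F.obj x) :=
  (CategoryTheory.Equivalence.mk F G (eqToIso h1.symm)
    (eqToIso h2)).fullyFaithfulFunctor.autMulEquivOfFullyFaithful x

def autProdMulEquiv {C D : Type*} [Category C] [Category D] (x : C) (y : D) :
    Aut ((x, y) : C × D) ≃* Aut x × Aut y where
  toFun f := (⟨f.hom.1, f.inv.1, congrArg Prod.fst f.hom_inv_id, congrArg Prod.fst f.inv_hom_id⟩,
              ⟨f.hom.2, f.inv.2, congrArg Prod.snd f.hom_inv_id, congrArg Prod.snd f.inv_hom_id⟩)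
  invFun g := ⟨(g.1.hom, g.2.hom), (g.1.inv, g.2.inv), by ext <;> simp <;> apply Iso.hom_inv_id, by ext <;> simp <;> apply Iso.inv_hom_id⟩
  left_inv f := by aesop_cat
  right_inv g := by aesop_cat
  map_mul' f g := by aesop_cat

def autPiMulEquiv {I : Type*} {C : I → Type*} [∀ i, Category (C i)] (x : ∀ i, C i) :
    Aut (x : ∀ i, C i) ≃* ∀ i, Aut (x i) where
  toFun f i := ⟨f.hom i, f.inv i, congrFun f.hom_inv_id i, congrFun f.inv_hom_id i⟩
  invFun g := ⟨fun i => (g i).hom, fun i => (g i).inv,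
      by funext i; exact (g i).hom_inv_id, by funext i; exact (g i).inv_hom_id⟩
  left_inv f := by aesop_cat
  right_inv g := by aesop_cat
  map_mul' f g := by aesop_cat

def endAutG {G : Type*} [Groupoid G] (x : G) : End x ≃* Aut x where
  toFun f := ⟨f, Groupoid.inv f, by simp, by simp⟩
  invFun g := g.hom
  left_inv f := rfl
  right_inv g := by ext; rfl
  map_mul' f g := by ext; rfl

open FundamentalGroupoidFunctor in
def fgProd (X Y : Type) [TopologicalSpace X] [TopologicalSpace Y] (x : X) (y : Y) :
    FundamentalGroup (X × Y) (x, y) ≃* FundamentalGroup X x × FundamentalGroup Y y :=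
  let A := TopCat.of X
  let B := TopCat.of Y
  let i := prodIso A B
  by
  let e0 := endAutG (⟨(x, y)⟩ : FundamentalGroupoid (X × Y))
  let e1 := autMulEquivOfStrictIso i.inv i.hom i.inv_hom_id i.hom_inv_id
      (⟨(x, y)⟩ : FundamentalGroupoid (X × Y))
  let e2 := autProdMulEquiv (⟨x⟩ : FundamentalGroupoid X) (⟨y⟩ : FundamentalGroupoid Y)
  exact ((e0.trans e1).trans e2).trans (MulEquiv.prodCongr (endAutG _).symm (endAutG _).symm)

open FundamentalGroupoidFunctor in
def fgPi {I : Type} (X : I → Type) [∀ i, TopologicalSpace (X i)] (x : ∀ i, X i) :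
    FundamentalGroup (∀ i, X i) x ≃* ∀ i, FundamentalGroup (X i) (x i) :=
  let i := piIso (fun i => TopCat.of (X i))
  by
  let e0 := endAutG (⟨x⟩ : FundamentalGroupoid (∀ i, X i))
  let e1 := autMulEquivOfStrictIso i.inv i.hom i.inv_hom_id i.hom_inv_id
      (⟨x⟩ : FundamentalGroupoid (∀ i, X i))
  let e2 := autPiMulEquiv (fun i => (⟨x i⟩ : FundamentalGroupoid (X i)))
  exact ((e0.trans e1).trans e2).trans (MulEquiv.piCongrRight fun i => (endAutG _).symm)

/-- Fundamental group is invariant under homeomorphism (up to moving basepoint). -/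
def fgHomeo {X Y : Type} [TopologicalSpace X] [TopologicalSpace Y] (h : X ≃ₜ Y) (x : X) :
    Σ y : Y, (FundamentalGroup X x ≃* FundamentalGroup Y y) :=
  let e := FundamentalGroupoidFunctor.equivOfHomotopyEquiv
    (X := TopCat.of X) (Y := TopCat.of Y) h.toHomotopyEquiv
  ⟨(e.functor.obj ⟨x⟩).as, by
    let e0 := endAutG (⟨x⟩ : FundamentalGroupoid X)
    let e1 := e.fullyFaithfulFunctor.autMulEquivOfFullyFaithful ⟨x⟩
    exact (e0.trans e1).trans (endAutG _).symm⟩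


/-- A subtype of a pi type given by pointwise predicates is homeomorphic to the pi of subtypes. -/
def pisplit {ι : Type*} {X : ι → Type*} [∀ i, TopologicalSpace (X i)] (P : ∀ i, X i → Prop) :
    {x : ∀ i, X i // ∀ i, P i (x i)} ≃ₜ ∀ i, {y : X i // P i y} where
  toFun x i := ⟨x.1 i, x.2 i⟩
  invFun x := ⟨fun i => (x i).1, fun i => (x i).2⟩
  left_inv x := rfl
  right_inv x := rfl
  continuous_toFun := continuous_pi fun i =>
    Continuous.subtype_mk ((continuous_apply i).comp continuous_subtype_val) _
  continuous_invFun := Continuous.subtype_mk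
    (continuous_pi fun i => continuous_subtype_val.comp (continuous_apply i)) _

/-- Pi over a sigma type versus iterated pi. -/
def piSigmaHomeo {α : Type*} {β : α → Type*} (γ : ∀ a, β a → Type*)
    [∀ a b, TopologicalSpace (γ a b)] :
    (∀ σ : Σ a, β a, γ σ.1 σ.2) ≃ₜ ∀ a, ∀ b, γ a b where
  toEquiv := Equiv.piCurry γ
  continuous_toFun := continuous_pi fun a => continuous_pi fun b => by
    exact continuous_apply (⟨a, b⟩ : Σ a, β a)
  continuous_invFun := continuous_pi fun σ =>
    (continuous_apply σ.2).comp (continuous_apply σ.1)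

/-- Pi of products versus product of pis. -/
def piProdHomeo {ι : Type*} (X Y : ι → Type*) [∀ i, TopologicalSpace (X i)]
    [∀ i, TopologicalSpace (Y i)] :
    (∀ i, X i × Y i) ≃ₜ (∀ i, X i) × (∀ i, Y i) where
  toFun f := (fun i => (f i).1, fun i => (f i).2)
  invFun g i := (g.1 i, g.2 i)
  left_inv f := rfl
  right_inv g := rfl
  continuous_toFun := Continuous.prodMk
    (continuous_pi fun i => continuous_fst.comp (continuous_apply i))
    (continuous_pi fun i => continuous_snd.comp (continuous_apply i))
  continuous_invFun := continuous_pi fun i => Continuous.prodMk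
    ((continuous_apply i).comp continuous_fst) ((continuous_apply i).comp continuous_snd)


namespace WildCore
attribute [local instance] Classical.propDecidable
set_option linter.unusedSectionVars false

/-- `σ` is a sign. -/
def SGN (σ : ℂ) : Prop := σ = 1 ∨ σ = -1

namespace SGN
variable {σ σ' : ℂ}
lemma one : SGN 1 := Or.inl rfl
lemma ne (h : SGN σ) : σ ≠ 0 := by rcases h with h | h <;> simp [h]
lemma mul (h : SGN σ) (h' : SGN σ') : SGN (σ * σ') := by
  rcases h with h | h <;> rcases h' with h' | h' <;> simp [h, h', SGN]
lemma sq (h : SGN σ) : σ * σ = 1 := by rcases h with h | h <;> simp [h]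
lemma cases (h : SGN σ) (h' : SGN σ') : σ' = σ ∨ σ' = -σ := by
  rcases h with h | h <;> rcases h' with h' | h' <;> simp [h, h']
lemma sub_ne (h : SGN σ) (h' : SGN σ') (hne : σ ≠ σ') : σ - σ' ≠ 0 := by
  rcases h with rfl | rfl <;> rcases h' with rfl | rfl <;>
    first
    | exact absurd rfl hne
    | norm_num
end SGN

variable {M : Type} [AddCommGroup M] [Module ℂ M] [NoZeroSMulDivisors ℂ M]

lemma smul_cancel {a b : ℂ} {w : M} (hw : w ≠ 0) (h : a • w = b • w) : a = b := by
  have h2 : (a - b) • w = 0 := by rw [sub_smul, h, sub_self]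
  rcases smul_eq_zero.mp h2 with h3 | h3
  · exact sub_eq_zero.mp h3
  · exact absurd h3 hw

lemma smul_zero_iff {a : ℂ} (ha : a ≠ 0) {w w' : M} (h : w = a • w') : w = 0 ↔ w' = 0 := by
  constructor
  · intro h0; rcases smul_eq_zero.mp (h0 ▸ h.symm) with h1 | h1
    · exact absurd h1 ha
    · exact h1
  · intro h0; rw [h, h0, smul_zero]

lemma mulsgn_zero_iff {a : ℂ} (ha : a ≠ 0) {w w' : ℂ} (h : w = a * w') : w = 0 ↔ w' = 0 := by
  constructor
  · intro h0; rcases mul_eq_zero.mp (h0 ▸ h.symm) with h1 | h1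
    · exact absurd h1 ha
    · exact h1
  · intro h0; rw [h, h0, mul_zero]

variable {ι : Type} [Fintype ι]
variable (τ : ι → M) (c : ι → ℂ)

/-- The condition cutting out one level of the universal deformation space. -/
def Scond (y : ι → ℂ) : Prop := ∀ i j : ι, ∀ σ : ℂ, SGN σ → τ i = σ • τ j →
  (c i = σ * c j → y i = σ * y j) ∧ (c i ≠ σ * c j → y i ≠ σ * y j)

/-- Setoid identifying indices whose data agree up to sign. -/
def s1 : Setoid ι where
  r i j := ∃ σ : ℂ, SGN σ ∧ τ i = σ • τ j ∧ c i = σ * c j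
  iseqv := by
    constructor
    · exact fun i => ⟨1, SGN.one, by simp, by simp⟩
    · rintro i j ⟨σ, hσ, h1, h2⟩
      exact ⟨σ, hσ, by rw [h1, smul_smul, hσ.sq, one_smul],
        by rw [h2, ← mul_assoc, hσ.sq, one_mul]⟩
    · rintro i j k ⟨σ, hσ, h1, h2⟩ ⟨σ', hσ', h1', h2'⟩
      exact ⟨σ * σ', hσ.mul hσ', by rw [h1, h1', smul_smul], by rw [h2, h2', mul_assoc]⟩

def Q : Type := Quotient (s1 τ c)

instance : Fintype (Q τ c) := @Quotient.fintype _ _ (s1 τ c) (Classical.decRel _)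

def mkQ (i : ι) : Q τ c := Quotient.mk (s1 τ c) i

lemma rel_out (i : ι) : ∃ σ : ℂ, SGN σ ∧ τ i = σ • τ ((mkQ τ c i).out) ∧
    c i = σ * c ((mkQ τ c i).out) := by
  have h : Quotient.mk (s1 τ c) ((mkQ τ c i).out) = Quotient.mk (s1 τ c) i :=
    (mkQ τ c i).out_eq
  exact (s1 τ c).iseqv.symm (Quotient.exact h)

/-- the sign relating `i` to the representative of its class -/
def sgn (i : ι) : ℂ :=
  if τ i = τ ((mkQ τ c i).out) ∧ c i = c ((mkQ τ c i).out) then 1 else -1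

lemma sgn_spec (i : ι) : SGN (sgn τ c i) ∧ τ i = sgn τ c i • τ ((mkQ τ c i).out) ∧
    c i = sgn τ c i * c ((mkQ τ c i).out) := by
  unfold sgn
  split_ifs with h
  · exact ⟨SGN.one, by simp [h.1], by simp [h.2]⟩
  · rcases rel_out τ c i with ⟨σ, hσ, h1, h2⟩
    rcases hσ with rfl | rfl
    · exact absurd ⟨by simpa using h1, by simpa using h2⟩ h
    · exact ⟨Or.inr rfl, h1, h2⟩

lemma sgn_out (q : Q τ c) : sgn τ c q.out = 1 := by
  unfold sgn
  have h : mkQ τ c q.out = q := q.out_eq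
  rw [if_pos (by rw [h]; exact ⟨rfl, rfl⟩)]

/-- type-A classes: classes with nonzero tail -/
def QA : Type := {q : Q τ c // τ q.out ≠ 0}
/-- type-B classes: zero tail, nonzero head -/
def QB : Type := {q : Q τ c // τ q.out = 0 ∧ c q.out ≠ 0}

instance : Fintype (QA τ c) := @Subtype.fintype _ _ (fun _ => Classical.propDecidable _) _
instance : Fintype (QB τ c) := @Subtype.fintype _ _ (fun _ => Classical.propDecidable _) _

/-- Setoid identifying type-A classes whose tails agree up to sign. -/
def s2 : Setoid (QA τ c) where
  r q q' := ∃ σ : ℂ, SGN σ ∧ τ q.1.out = σ • τ q'.1.out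
  iseqv := by
    constructor
    · exact fun q => ⟨1, SGN.one, by simp⟩
    · rintro q q' ⟨σ, hσ, h1⟩
      exact ⟨σ, hσ, by rw [h1, smul_smul, hσ.sq, one_smul]⟩
    · rintro q q' q'' ⟨σ, hσ, h1⟩ ⟨σ', hσ', h1'⟩
      exact ⟨σ * σ', hσ.mul hσ', by rw [h1, h1', smul_smul]⟩

def O : Type := Quotient (s2 τ c)

instance : Fintype (O τ c) := @Quotient.fintype _ _ (s2 τ c) (Classical.decRel _)

def mkO (q : QA τ c) : O τ c := Quotient.mk (s2 τ c) q

lemma rel2_out (q : QA τ c) : ∃ σ : ℂ, SGN σ ∧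
    τ q.1.out = σ • τ ((mkO τ c q).out).1.out := by
  have h : Quotient.mk (s2 τ c) ((mkO τ c q).out) = Quotient.mk (s2 τ c) q :=
    (mkO τ c q).out_eq
  exact (s2 τ c).iseqv.symm (Quotient.exact h)

def sgn2 (q : QA τ c) : ℂ :=
  if τ q.1.out = τ ((mkO τ c q).out).1.out then 1 else -1

lemma sgn2_spec (q : QA τ c) : SGN (sgn2 τ c q) ∧
    τ q.1.out = sgn2 τ c q • τ ((mkO τ c q).out).1.out := by
  unfold sgn2
  split_ifs with h
  · exact ⟨SGN.one, by simp [h]⟩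
  · rcases rel2_out τ c q with ⟨σ, hσ, h1⟩
    rcases hσ with rfl | rfl
    · exact absurd (by simpa using h1) h
    · exact ⟨Or.inr rfl, h1⟩

def Fib (o : O τ c) : Type := {q : QA τ c // mkO τ c q = o}

instance (o : O τ c) : Fintype (Fib τ c o) :=
  @Subtype.fintype _ _ (fun _ => Classical.propDecidable _) _

def m (o : O τ c) : ℕ := Fintype.card (Fib τ c o)

def eqv (o : O τ c) : Fib τ c o ≃ Fin (m τ c o) := Fintype.equivFin _

def nB : ℕ := Fintype.card (QB τ c)

def eB : QB τ c ≃ Fin (nB τ c) := Fintype.equivFin _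


section Derive
variable {τ} {c} {y : ι → ℂ} (hy : Scond τ c y)

lemma not_rel_of_ne {q q' : Q τ c} (h : q ≠ q') {σ : ℂ} (hσ : SGN σ)
    (hτ : τ q.out = σ • τ q'.out) : c q.out ≠ σ * c q'.out := fun hc =>
  h (by rw [← q.out_eq, ← q'.out_eq]; exact Quotient.sound ⟨σ, hσ, hτ, hc⟩)

include hy

lemma y_rep (i : ι) : y i = sgn τ c i * y ((mkQ τ c i).out) := by
  obtain ⟨hσ, hτ, hc⟩ := sgn_spec τ c i
  exact (hy i _ _ hσ hτ).1 hc

lemma y_zero {i : ι} (h0 : τ i = 0) (hc : c i = 0) : y i = 0 := by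
  have h := (hy i i (-1) (Or.inr rfl) (by rw [h0]; simp)).1 (by rw [hc]; ring)
  rw [neg_one_mul] at h
  exact (CharZero.eq_neg_self_iff).mp h

lemma fval_ne {q q' : QA τ c} (ho : mkO τ c q = mkO τ c q') (hne : q ≠ q') :
    sgn2 τ c q * y q.1.out ≠ sgn2 τ c q' * y q'.1.out := by
  obtain ⟨hσ2, hτ2⟩ := sgn2_spec τ c q
  obtain ⟨hσ2', hτ2'⟩ := sgn2_spec τ c q'
  rw [ho] at hτ2
  have hBrev : τ ((mkO τ c q').out).1.out = sgn2 τ c q' • τ q'.1.out := by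
    rw [hτ2', smul_smul, hσ2'.sq, one_smul]
  have hqq' : τ q.1.out = (sgn2 τ c q * sgn2 τ c q') • τ q'.1.out := by
    rw [hτ2, hBrev, smul_smul]
  have hσp : SGN (sgn2 τ c q * sgn2 τ c q') := hσ2.mul hσ2'
  have hq1 : q.1 ≠ q'.1 := fun h => hne (Subtype.ext h)
  have hyne : y q.1.out ≠ (sgn2 τ c q * sgn2 τ c q') * y q'.1.out :=
    (hy _ _ _ hσp hqq').2 (not_rel_of_ne hq1 hσp hqq')
  intro hcon
  apply hyne
  calc y q.1.out = sgn2 τ c q * (sgn2 τ c q * y q.1.out) := by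
        rw [← mul_assoc, hσ2.sq, one_mul]
    _ = sgn2 τ c q * (sgn2 τ c q' * y q'.1.out) := by rw [hcon]
    _ = (sgn2 τ c q * sgn2 τ c q') * y q'.1.out := by rw [mul_assoc]

lemma yB_ne_zero (q : QB τ c) : y q.1.out ≠ 0 := by
  have h := (hy q.1.out q.1.out (-1) (Or.inr rfl) (by rw [q.2.1]; simp)).2
    (fun h => q.2.2 (by rw [neg_one_mul] at h; exact (CharZero.eq_neg_self_iff).mp h))
  intro h0
  exact h (by rw [h0]; ring)

lemma yB_ne {q q' : QB τ c} (hne : q ≠ q') {σ : ℂ} (hσ : SGN σ) :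
    y q.1.out ≠ σ * y q'.1.out := by
  have hτσ : τ q.1.out = σ • τ q'.1.out := by rw [q.2.1, q'.2.1, smul_zero]
  exact (hy _ _ σ hσ hτσ).2 (not_rel_of_ne (fun h => hne (Subtype.ext h)) hσ hτσ)

end Derive

/-- the forward map to the product of configuration spaces -/
def fwd (y : ι → ℂ) (hy : Scond τ c y) :
    (∀ o : O τ c, Conf (m τ c o)) × XBC (nB τ c) :=
  (fun o => ⟨fun a => sgn2 τ c ((eqv τ c o).symm a).1 * y ((eqv τ c o).symm a).1.1.out, by
      intro a a' h
      by_contra hne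
      have hFne : (eqv τ c o).symm a ≠ (eqv τ c o).symm a' := fun h2 => hne (by
        rw [← Equiv.apply_symm_apply (eqv τ c o) a, h2, Equiv.apply_symm_apply])
      have hq : ((eqv τ c o).symm a).1 ≠ ((eqv τ c o).symm a').1 := fun h2 => hFne (Subtype.ext h2)
      have ho : mkO τ c ((eqv τ c o).symm a).1 = mkO τ c ((eqv τ c o).symm a').1 := by
        rw [((eqv τ c o).symm a).2, ((eqv τ c o).symm a').2]
      exact fval_ne hy ho hq h⟩,
   ⟨fun b => y ((eB τ c).symm b).1.out, ⟨fun b => yB_ne_zero hy _, fun b b' hbb' => by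
      have hne : (eB τ c).symm b ≠ (eB τ c).symm b' := fun h2 => hbb' (by
        rw [← Equiv.apply_symm_apply (eB τ c) b, h2, Equiv.apply_symm_apply])
      constructor
      · have := yB_ne hy hne (SGN.one : SGN 1)
        simpa using this
      · have := yB_ne hy hne (Or.inr rfl : SGN (-1))
        simpa [neg_one_mul] using this⟩⟩)

/-- the value of a backward map on a class -/
def val (z : (∀ o : O τ c, Conf (m τ c o)) × XBC (nB τ c)) (q : Q τ c) : ℂ :=
  if h : τ q.out = 0 then
    (if hc : c q.out = 0 then 0 else (z.2).1 ((eB τ c) ⟨q, h, hc⟩))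
  else sgn2 τ c ⟨q, h⟩ * (z.1 (mkO τ c ⟨q, h⟩)).1 ((eqv τ c (mkO τ c ⟨q, h⟩)) ⟨⟨q, h⟩, rfl⟩)

/-- the backward map -/
def bwd (z : (∀ o : O τ c, Conf (m τ c o)) × XBC (nB τ c)) (i : ι) : ℂ :=
  sgn τ c i * val τ c z (mkQ τ c i)

section ValLemmas
variable {τ c} (z : (∀ o : O τ c, Conf (m τ c o)) × XBC (nB τ c))

lemma val_zero {q : Q τ c} (h : τ q.out = 0) (hc : c q.out = 0) : val τ c z q = 0 := by
  rw [val, dif_pos h, dif_pos hc]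

lemma val_B {q : Q τ c} (h : τ q.out = 0) (hc : c q.out ≠ 0) :
    val τ c z q = (z.2).1 ((eB τ c) ⟨q, h, hc⟩) := by
  rw [val, dif_pos h, dif_neg hc]

lemma val_A (q : QA τ c) :
    val τ c z q.1 = sgn2 τ c q * (z.1 (mkO τ c q)).1 ((eqv τ c (mkO τ c q)) ⟨q, rfl⟩) := by
  obtain ⟨q', h⟩ := q
  rw [val, dif_neg h]

lemma val_trans (o : O τ c) (qh : Fib τ c o) :
    (z.1 (mkO τ c qh.1)).1 ((eqv τ c (mkO τ c qh.1)) ⟨qh.1, rfl⟩) = (z.1 o).1 ((eqv τ c o) qh) := by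
  obtain ⟨q, hq⟩ := qh
  subst hq
  rfl

end ValLemmas

theorem bwd_mem (z : (∀ o : O τ c, Conf (m τ c o)) × XBC (nB τ c)) :
    Scond τ c (bwd τ c z) := by
  intro i j σ hσ hτij
  obtain ⟨hsi, hτi, hci⟩ := sgn_spec τ c i
  obtain ⟨hsj, hτj, hcj⟩ := sgn_spec τ c j
  constructor
  · intro hcij
    have hQ : mkQ τ c i = mkQ τ c j := Quotient.sound ⟨σ, hσ, hτij, hcij⟩
    rw [bwd, bwd, hQ]
    rw [hQ] at hτi hci
    have h1 : (sgn τ c i) • τ (mkQ τ c j).out = (σ * sgn τ c j) • τ (mkQ τ c j).out := by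
      rw [← hτi, hτij, hτj, smul_smul]
    have h2 : (sgn τ c i) * c (mkQ τ c j).out = (σ * sgn τ c j) * c (mkQ τ c j).out := by
      rw [← hci, hcij, hcj, mul_assoc]
    by_cases hss : sgn τ c i = σ * sgn τ c j
    · rw [hss, mul_assoc]
    · have hτR : τ (mkQ τ c j).out = 0 := by
        rcases smul_eq_zero.mp (show (sgn τ c i - σ * sgn τ c j) • τ (mkQ τ c j).out = 0 by
          rw [sub_smul, h1, sub_self]) with h | h
        · exact absurd (sub_eq_zero.mp h) hss
        · exact h
      have hcR : c (mkQ τ c j).out = 0 := by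
        rcases mul_eq_zero.mp (show (sgn τ c i - σ * sgn τ c j) * c (mkQ τ c j).out = 0 by
          rw [sub_mul, h2, sub_self]) with h | h
        · exact absurd (sub_eq_zero.mp h) hss
        · exact h
      rw [val_zero z hτR hcR, mul_zero, mul_zero, mul_zero]
  · intro hcij hcon
    by_cases hτ0 : τ i = 0
    · have hτj0 : τ j = 0 := by
        rcases smul_eq_zero.mp (hτ0 ▸ hτij.symm) with h | h
        · exact absurd h hσ.ne
        · exact h
      have hRi0 : τ (mkQ τ c i).out = 0 := (smul_zero_iff hsi.ne hτi).mp hτ0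
      have hRj0 : τ (mkQ τ c j).out = 0 := (smul_zero_iff hsj.ne hτj).mp hτj0
      by_cases hc0 : c i = 0
      · have hcRi : c (mkQ τ c i).out = 0 := (mulsgn_zero_iff hsi.ne hci).mp hc0
        have hcj0 : c j ≠ 0 := fun h => hcij (by rw [hc0, h, mul_zero])
        have hcRj : c (mkQ τ c j).out ≠ 0 := fun h =>
          hcj0 ((mulsgn_zero_iff hsj.ne hcj).mpr h)
        have hyi : bwd τ c z i = 0 := by rw [bwd, val_zero z hRi0 hcRi, mul_zero]
        have hyj : bwd τ c z j ≠ 0 := by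
          rw [bwd, val_B z hRj0 hcRj]
          exact mul_ne_zero hsj.ne (z.2.2.1 _)
        rw [hyi] at hcon
        exact (mul_ne_zero hσ.ne hyj) hcon.symm
      · by_cases hcj0 : c j = 0
        · have hcRj : c (mkQ τ c j).out = 0 := (mulsgn_zero_iff hsj.ne hcj).mp hcj0
          have hcRi : c (mkQ τ c i).out ≠ 0 := fun h =>
            hc0 ((mulsgn_zero_iff hsi.ne hci).mpr h)
          have hyj : bwd τ c z j = 0 := by rw [bwd, val_zero z hRj0 hcRj, mul_zero]
          have hyi : bwd τ c z i ≠ 0 := by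
            rw [bwd, val_B z hRi0 hcRi]
            exact mul_ne_zero hsi.ne (z.2.2.1 _)
          rw [hyj, mul_zero] at hcon
          exact hyi hcon
        · have hcRi : c (mkQ τ c i).out ≠ 0 := fun h =>
            hc0 ((mulsgn_zero_iff hsi.ne hci).mpr h)
          have hcRj : c (mkQ τ c j).out ≠ 0 := fun h =>
            hcj0 ((mulsgn_zero_iff hsj.ne hcj).mpr h)
          rw [bwd, bwd, val_B z hRi0 hcRi, val_B z hRj0 hcRj] at hcon
          by_cases hQQ : mkQ τ c i = mkQ τ c j
          · have hq : (⟨mkQ τ c i, hRi0, hcRi⟩ : QB τ c) = ⟨mkQ τ c j, hRj0, hcRj⟩ :=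
              Subtype.ext hQQ
            rw [hq] at hcon
            have hzne := z.2.2.1 ((eB τ c) ⟨mkQ τ c j, hRj0, hcRj⟩)
            rw [← mul_assoc] at hcon
            have hss : sgn τ c i = σ * sgn τ c j := mul_right_cancel₀ hzne hcon
            apply hcij
            rw [hci, hQQ, hss, hcj, mul_assoc]
          · have hqq : (⟨mkQ τ c i, hRi0, hcRi⟩ : QB τ c) ≠ ⟨mkQ τ c j, hRj0, hcRj⟩ :=
              fun h => hQQ (congrArg Subtype.val h)
            have hbb : (eB τ c) ⟨mkQ τ c i, hRi0, hcRi⟩ ≠ (eB τ c) ⟨mkQ τ c j, hRj0, hcRj⟩ :=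
              fun h => hqq ((eB τ c).injective h)
            obtain ⟨hne1, hne2⟩ := z.2.2.2 _ _ hbb
            rcases SGN.cases hsi (hσ.mul hsj) with hE | hE
            · apply hne1
              have hstep : sgn τ c i * z.2.1 ((eB τ c) ⟨mkQ τ c i, hRi0, hcRi⟩) =
                  sgn τ c i * z.2.1 ((eB τ c) ⟨mkQ τ c j, hRj0, hcRj⟩) := by
                rw [hcon, ← mul_assoc, hE]
              exact mul_left_cancel₀ hsi.ne hstep
            · apply hne2
              have hstep : sgn τ c i * z.2.1 ((eB τ c) ⟨mkQ τ c i, hRi0, hcRi⟩) =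
                  sgn τ c i * (- z.2.1 ((eB τ c) ⟨mkQ τ c j, hRj0, hcRj⟩)) := by
                rw [hcon, ← mul_assoc, hE]; ring
              exact mul_left_cancel₀ hsi.ne hstep
    · have hτj0 : τ j ≠ 0 := fun h => hτ0 (by rw [hτij, h, smul_zero])
      have hRi : τ (mkQ τ c i).out ≠ 0 := fun h => hτ0 ((smul_zero_iff hsi.ne hτi).mpr h)
      have hRj : τ (mkQ τ c j).out ≠ 0 := fun h => hτj0 ((smul_zero_iff hsj.ne hτj).mpr h)
      have hrev_i : τ (mkQ τ c i).out = sgn τ c i • τ i := by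
        rw [hτi, smul_smul, hsi.sq, one_smul]
      have horb : τ ((⟨mkQ τ c i, hRi⟩ : QA τ c)).1.out =
          (sgn τ c i * (σ * sgn τ c j)) • τ ((⟨mkQ τ c j, hRj⟩ : QA τ c)).1.out := by
        show τ (mkQ τ c i).out = _
        rw [hrev_i, hτij, hτj, smul_smul, smul_smul, mul_assoc]
      have hO : mkO τ c ⟨mkQ τ c i, hRi⟩ = mkO τ c ⟨mkQ τ c j, hRj⟩ :=
        Quotient.sound ⟨_, hsi.mul (hσ.mul hsj), horb⟩
      have hQQ : mkQ τ c i ≠ mkQ τ c j := by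
        intro h
        obtain ⟨σ', hσ', hτ', hc'⟩ := Quotient.exact h
        have hσσ : σ' ≠ σ := fun he => hcij (he ▸ hc')
        have hz : (σ - σ') • τ j = 0 := by rw [sub_smul, ← hτij, ← hτ', sub_self]
        rcases smul_eq_zero.mp hz with h2 | h2
        · exact (SGN.sub_ne hσ hσ' (Ne.symm hσσ)) h2
        · exact hτj0 h2
      have hqq : (⟨mkQ τ c i, hRi⟩ : QA τ c) ≠ ⟨mkQ τ c j, hRj⟩ :=
        fun h => hQQ (congrArg Subtype.val h)
      rw [bwd, bwd, show val τ c z (mkQ τ c i) = _ from val_A z ⟨mkQ τ c i, hRi⟩,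
        show val τ c z (mkQ τ c j) = _ from val_A z ⟨mkQ τ c j, hRj⟩,
        val_trans z (mkO τ c ⟨mkQ τ c i, hRi⟩) ⟨⟨mkQ τ c j, hRj⟩, hO.symm⟩] at hcon
      have hFib : (⟨⟨mkQ τ c i, hRi⟩, rfl⟩ : Fib τ c (mkO τ c ⟨mkQ τ c i, hRi⟩)) ≠
          ⟨⟨mkQ τ c j, hRj⟩, hO.symm⟩ := fun h => hqq (congrArg Subtype.val h)
      have hval_ne : (z.1 (mkO τ c ⟨mkQ τ c i, hRi⟩)).1
            ((eqv τ c (mkO τ c ⟨mkQ τ c i, hRi⟩)) ⟨⟨mkQ τ c i, hRi⟩, rfl⟩) ≠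
          (z.1 (mkO τ c ⟨mkQ τ c i, hRi⟩)).1
            ((eqv τ c (mkO τ c ⟨mkQ τ c i, hRi⟩)) ⟨⟨mkQ τ c j, hRj⟩, hO.symm⟩) :=
        fun h => hFib ((eqv τ c _).injective ((z.1 _).2 h))
      obtain ⟨hs2i, hτ2i⟩ := sgn2_spec τ c ⟨mkQ τ c i, hRi⟩
      obtain ⟨hs2j, hτ2j⟩ := sgn2_spec τ c ⟨mkQ τ c j, hRj⟩
      rw [hO] at hτ2i
      have hBne : τ ((mkO τ c ⟨mkQ τ c j, hRj⟩).out).1.out ≠ 0 :=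
        ((mkO τ c ⟨mkQ τ c j, hRj⟩).out).2
      have hSi : τ i = (sgn τ c i * sgn2 τ c ⟨mkQ τ c i, hRi⟩) •
          τ ((mkO τ c ⟨mkQ τ c j, hRj⟩).out).1.out := by
        rw [hτi, hτ2i, smul_smul]
      have hSj : τ j = (sgn τ c j * sgn2 τ c ⟨mkQ τ c j, hRj⟩) •
          τ ((mkO τ c ⟨mkQ τ c j, hRj⟩).out).1.out := by
        rw [hτj, hτ2j, smul_smul]
      have hkey : (sgn τ c i * sgn2 τ c ⟨mkQ τ c i, hRi⟩) •
            τ ((mkO τ c ⟨mkQ τ c j, hRj⟩).out).1.out =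
          (σ * (sgn τ c j * sgn2 τ c ⟨mkQ τ c j, hRj⟩)) •
            τ ((mkO τ c ⟨mkQ τ c j, hRj⟩).out).1.out := by
        rw [← hSi, hτij, hSj, smul_smul]
      have hSS : sgn τ c i * sgn2 τ c ⟨mkQ τ c i, hRi⟩ =
          σ * (sgn τ c j * sgn2 τ c ⟨mkQ τ c j, hRj⟩) := smul_cancel hBne hkey
      apply hval_ne
      have hstep : (sgn τ c i * sgn2 τ c ⟨mkQ τ c i, hRi⟩) *
            (z.1 (mkO τ c ⟨mkQ τ c i, hRi⟩)).1
              ((eqv τ c (mkO τ c ⟨mkQ τ c i, hRi⟩)) ⟨⟨mkQ τ c i, hRi⟩, rfl⟩) =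
          (sgn τ c i * sgn2 τ c ⟨mkQ τ c i, hRi⟩) *
            (z.1 (mkO τ c ⟨mkQ τ c i, hRi⟩)).1
              ((eqv τ c (mkO τ c ⟨mkQ τ c i, hRi⟩)) ⟨⟨mkQ τ c j, hRj⟩, hO.symm⟩) := by
        calc _ = sgn τ c i * (sgn2 τ c ⟨mkQ τ c i, hRi⟩ *
                (z.1 (mkO τ c ⟨mkQ τ c i, hRi⟩)).1
                  ((eqv τ c (mkO τ c ⟨mkQ τ c i, hRi⟩)) ⟨⟨mkQ τ c i, hRi⟩, rfl⟩)) := by ring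
          _ = σ * (sgn τ c j * (sgn2 τ c ⟨mkQ τ c j, hRj⟩ *
                (z.1 (mkO τ c ⟨mkQ τ c i, hRi⟩)).1
                  ((eqv τ c (mkO τ c ⟨mkQ τ c i, hRi⟩)) ⟨⟨mkQ τ c j, hRj⟩, hO.symm⟩))) := hcon
          _ = _ := by rw [hSS]; ring
      exact mul_left_cancel₀ (mul_ne_zero hsi.ne hs2i.ne) hstep

theorem bwd_fwd (y : ι → ℂ) (hy : Scond τ c y) : bwd τ c (fwd τ c y hy) = y := by
  funext i
  by_cases h : τ (mkQ τ c i).out = 0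
  · by_cases hc : c (mkQ τ c i).out = 0
    · rw [bwd, val_zero _ h hc, mul_zero, y_rep hy i, y_zero hy h hc, mul_zero]
    · rw [bwd, val_B _ h hc]
      show sgn τ c i * y (((eB τ c).symm ((eB τ c) ⟨mkQ τ c i, h, hc⟩)).1.out) = y i
      erw [Equiv.symm_apply_apply]
      exact (y_rep hy i).symm
  · rw [bwd, show val τ c (fwd τ c y hy) (mkQ τ c i) = _ from val_A _ ⟨mkQ τ c i, h⟩]
    show sgn τ c i * (sgn2 τ c ⟨mkQ τ c i, h⟩ *
      (sgn2 τ c (((eqv τ c (mkO τ c ⟨mkQ τ c i, h⟩)).symm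
          ((eqv τ c (mkO τ c ⟨mkQ τ c i, h⟩)) ⟨⟨mkQ τ c i, h⟩, rfl⟩)).1) *
        y (((eqv τ c (mkO τ c ⟨mkQ τ c i, h⟩)).symm
          ((eqv τ c (mkO τ c ⟨mkQ τ c i, h⟩)) ⟨⟨mkQ τ c i, h⟩, rfl⟩)).1.1.out))) = y i
    erw [Equiv.symm_apply_apply]
    rw [← mul_assoc (sgn2 τ c ⟨mkQ τ c i, h⟩), (sgn2_spec τ c ⟨mkQ τ c i, h⟩).1.sq, one_mul]
    exact (y_rep hy i).symm

theorem fwd_bwd (z : (∀ o : O τ c, Conf (m τ c o)) × XBC (nB τ c)) :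
    fwd τ c (bwd τ c z) (bwd_mem τ c z) = z := by
  apply Prod.ext
  · funext o
    apply Subtype.ext
    funext a
    show sgn2 τ c ((eqv τ c o).symm a).1 * bwd τ c z ((eqv τ c o).symm a).1.1.out = (z.1 o).1 a
    rw [bwd, show mkQ τ c ((eqv τ c o).symm a).1.1.out = ((eqv τ c o).symm a).1.1 from
        ((eqv τ c o).symm a).1.1.out_eq,
      sgn_out, one_mul, val_A z ((eqv τ c o).symm a).1,
      val_trans z o ((eqv τ c o).symm a), Equiv.apply_symm_apply,
      ← mul_assoc, (sgn2_spec τ c ((eqv τ c o).symm a).1).1.sq, one_mul]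
  · apply Subtype.ext
    funext b
    show bwd τ c z ((eB τ c).symm b).1.out = z.2.1 b
    rw [bwd, show mkQ τ c ((eB τ c).symm b).1.out = ((eB τ c).symm b).1 from
        ((eB τ c).symm b).1.out_eq,
      sgn_out, one_mul, val_B z ((eB τ c).symm b).2.1 ((eB τ c).symm b).2.2]
    show z.2.1 ((eB τ c) ((eB τ c).symm b)) = z.2.1 b
    rw [Equiv.apply_symm_apply]

theorem fwd_continuous : Continuous (fun y : {y : ι → ℂ // Scond τ c y} => fwd τ c y.1 y.2) := by
  unfold fwd
  apply Continuous.prodMk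
  · apply continuous_pi
    intro o
    apply Continuous.subtype_mk
    apply continuous_pi
    intro a
    exact continuous_const.mul ((continuous_apply _).comp continuous_subtype_val)
  · apply Continuous.subtype_mk
    apply continuous_pi
    intro b
    exact (continuous_apply _).comp continuous_subtype_val

theorem val_continuous (q : Q τ c) :
    Continuous (fun z : (∀ o : O τ c, Conf (m τ c o)) × XBC (nB τ c) => val τ c z q) := by
  by_cases h : τ q.out = 0
  · by_cases hc : c q.out = 0
    · have heq : (fun z : (∀ o : O τ c, Conf (m τ c o)) × XBC (nB τ c) => val τ c z q) =
          fun _ => 0 := funext fun z => val_zero z h hc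
      rw [heq]; exact continuous_const
    · have heq : (fun z : (∀ o : O τ c, Conf (m τ c o)) × XBC (nB τ c) => val τ c z q) =
          fun z => z.2.1 ((eB τ c) ⟨q, h, hc⟩) := funext fun z => val_B z h hc
      rw [heq]
      exact (continuous_apply _).comp (continuous_subtype_val.comp continuous_snd)
  · have heq : (fun z : (∀ o : O τ c, Conf (m τ c o)) × XBC (nB τ c) => val τ c z q) =
        fun z => sgn2 τ c ⟨q, h⟩ * (z.1 (mkO τ c ⟨q, h⟩)).1
          ((eqv τ c (mkO τ c ⟨q, h⟩)) ⟨⟨q, h⟩, rfl⟩) := funext fun z => val_A z ⟨q, h⟩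
    rw [heq]
    exact continuous_const.mul ((continuous_apply _).comp (continuous_subtype_val.comp
      ((continuous_apply _).comp continuous_fst)))

theorem bwd_continuous : Continuous (fun z : (∀ o : O τ c, Conf (m τ c o)) × XBC (nB τ c) =>
    (⟨bwd τ c z, bwd_mem τ c z⟩ : {y : ι → ℂ // Scond τ c y})) :=
  Continuous.subtype_mk
    (continuous_pi fun i => continuous_const.mul (val_continuous τ c _)) _

/-- The core homeomorphism: one level of the deformation space splits as a product of
configuration spaces of type A and one of type B/C. -/
def coreHomeo : {y : ι → ℂ // Scond τ c y} ≃ₜ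
    ((∀ o : O τ c, Conf (m τ c o)) × XBC (nB τ c)) where
  toFun y := fwd τ c y.1 y.2
  invFun z := ⟨bwd τ c z, bwd_mem τ c z⟩
  left_inv y := Subtype.ext (bwd_fwd τ c y.1 y.2)
  right_inv z := fwd_bwd τ c z
  continuous_toFun := fwd_continuous τ c
  continuous_invFun := bwd_continuous τ c

theorem core : ∃ (J : Type) (_ : Fintype J) (mm : J → ℕ) (v : ℕ),
    Nonempty ({y : ι → ℂ // Scond τ c y} ≃ₜ ((∀ o : J, Conf (mm o)) × XBC v)) :=
  ⟨O τ c, inferInstance, m τ c, nB τ c, ⟨coreHomeo τ c⟩⟩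

end WildCore


theorem claimA (n p : ℕ) (A : Fin p → (Fin n → ℂ))
    (ΦB : Set ((Fin n → ℂ) →ₗ[ℂ] ℂ))
    (hΦB : ΦB = {α | ∃ i j : Fin n, i < j ∧ (α = prj n i - prj n j ∨ α = prj n j - prj n i ∨
        α = prj n i + prj n j ∨ α = -(prj n i + prj n j))} ∪ {α | ∃ i, α = prj n i})
    (d : ((Fin n → ℂ) →ₗ[ℂ] ℂ) → ℕ)
    (hd : ∀ α ∈ ΦB, d α ≤ p ∧ (∀ k : Fin p, d α < (k : ℕ) + 1 → α (A k) = 0) ∧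
      (1 ≤ d α → ∃ k : Fin p, (k : ℕ) + 1 = d α ∧ α (A k) ≠ 0))
    (BQ : Set (Fin p → (Fin n → ℂ)))
    (hBQ : BQ = {A' | ∀ α ∈ ΦB, (∀ k : Fin p, d α < (k : ℕ) + 1 → α (A' k) = 0) ∧
      ∀ k : Fin p, (k : ℕ) + 1 = d α → α (A' k) ≠ 0}) :
    BQ = {x | ∀ k : Fin p, WildCore.Scond
      (fun (i : Fin n) (l : Fin p) => if (k : ℕ) < (l : ℕ) then A l i else 0)
      (fun i : Fin n => A k i) (x k)} := by
  have happly_sub : ∀ (i j : Fin n) (vv : Fin n → ℂ), (prj n i - prj n j) vv = vv i - vv j :=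
    fun _ _ _ => rfl
  have happly_add : ∀ (i j : Fin n) (vv : Fin n → ℂ), (prj n i + prj n j) vv = vv i + vv j :=
    fun _ _ _ => rfl
  have happly_neg : ∀ (i j : Fin n) (vv : Fin n → ℂ),
      (-(prj n i + prj n j)) vv = -(vv i + vv j) := fun _ _ _ => rfl
  have happly : ∀ (i : Fin n) (vv : Fin n → ℂ), (prj n i) vv = vv i := fun _ _ => rfl
  have hLlt : ∀ α ∈ ΦB, ∀ k : Fin p,
      (d α < (k : ℕ) + 1 ↔ ∀ l : Fin p, (k : ℕ) ≤ (l : ℕ) → α (A l) = 0) := by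
    intro α hα k
    obtain ⟨hle, hvan, hex⟩ := hd α hα
    constructor
    · intro hlt l hl
      exact hvan l (by omega)
    · intro h
      by_contra hge
      obtain ⟨k', hk', hne⟩ := hex (by omega)
      exact hne (h k' (by omega))
  have hLeq : ∀ α ∈ ΦB, ∀ k : Fin p, ((k : ℕ) + 1 = d α ↔
      ((∀ l : Fin p, (k : ℕ) < (l : ℕ) → α (A l) = 0) ∧ α (A k) ≠ 0)) := by
    intro α hα k
    obtain ⟨hle, hvan, hex⟩ := hd α hα
    constructor
    · intro he
      refine ⟨fun l hl => hvan l (by omega), ?_⟩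
      obtain ⟨k', hk', hne⟩ := hex (by omega)
      have hkk : k' = k := Fin.ext (by omega)
      rwa [← hkk]
    · rintro ⟨hall, hk⟩
      have h1 : ¬ (d α < (k : ℕ) + 1) := fun h => hk (hvan k (by omega))
      by_contra hne2
      obtain ⟨k', hk', hne⟩ := hex (by omega)
      exact hne (hall k' (by omega))
  have hA2 := hd
  rw [hBQ]
  ext x
  simp only [Set.mem_setOf_eq]
  constructor
  · intro hx k i j σ hσ hτσ
    beta_reduce at hτσ ⊢
    have hτ : ∀ l : Fin p, (k : ℕ) < (l : ℕ) → A l i = σ * A l j := by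
      intro l hl
      have hc := congrFun hτσ l
      simp only [Pi.smul_apply, smul_eq_mul] at hc
      rw [if_pos hl, if_pos hl] at hc
      exact hc
    rcases eq_or_ne i j with rfl | hij
    · rcases hσ with rfl | rfl
      · exact ⟨fun _ => (one_mul _).symm, fun hcc => absurd (one_mul (A k i)).symm hcc⟩
      · have hmem : prj n i ∈ ΦB := by rw [hΦB]; exact Or.inr ⟨i, rfl⟩
        have hzero : ∀ l : Fin p, (k : ℕ) < (l : ℕ) → A l i = 0 := fun l hl => by
          have h2 := hτ l hl
          rw [neg_one_mul] at h2
          exact CharZero.eq_neg_self_iff.mp h2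
        constructor
        · intro hck
          have hck0 : A k i = 0 := by
            rw [neg_one_mul] at hck; exact CharZero.eq_neg_self_iff.mp hck
          have hdl : d (prj n i) < (k : ℕ) + 1 := (hLlt _ hmem k).mpr (fun l hl => by
            rw [happly]
            rcases eq_or_lt_of_le hl with he | hlt
            · have hlk : l = k := Fin.ext he.symm
              rw [hlk]; exact hck0
            · exact hzero l hlt)
          have hxk := (hx _ hmem).1 k hdl
          rw [happly] at hxk
          rw [hxk]; ring
        · intro hck
          have hck0 : A k i ≠ 0 := fun h => hck (by rw [h]; ring)
          have he : (k : ℕ) + 1 = d (prj n i) := (hLeq _ hmem k).mpr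
            ⟨fun l hl => by rw [happly]; exact hzero l hl, by rw [happly]; exact hck0⟩
          have hxk := (hx _ hmem).2 k he
          rw [happly] at hxk
          intro hcon
          rw [neg_one_mul] at hcon
          exact hxk (CharZero.eq_neg_self_iff.mp hcon)
    · rcases hσ with rfl | rfl
      · have hmem : prj n i - prj n j ∈ ΦB := by
          rw [hΦB]
          rcases lt_or_gt_of_ne hij with h | h
          · exact Or.inl ⟨i, j, h, Or.inl rfl⟩
          · exact Or.inl ⟨j, i, h, Or.inr (Or.inl rfl)⟩
        constructor
        · intro hck
          have hdl : d _ < (k : ℕ) + 1 := (hLlt _ hmem k).mpr (fun l hl => by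
            rw [happly_sub, sub_eq_zero]
            rcases eq_or_lt_of_le hl with he | hlt
            · have hlk : l = k := Fin.ext he.symm
              rw [hlk]; simpa using hck
            · simpa using hτ l hlt)
          have hxk := (hx _ hmem).1 k hdl
          rw [happly_sub, sub_eq_zero] at hxk
          simpa using hxk
        · intro hck
          have he : (k : ℕ) + 1 = d _ := (hLeq _ hmem k).mpr
            ⟨fun l hl => by rw [happly_sub, sub_eq_zero]; simpa using hτ l hl,
             by rw [happly_sub]; intro h0; exact hck (by rw [one_mul]; exact sub_eq_zero.mp h0)⟩
          have hxk := (hx _ hmem).2 k he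
          rw [happly_sub] at hxk
          intro hcon
          exact hxk (by rw [sub_eq_zero]; simpa using hcon)
      · have hmem : prj n i + prj n j ∈ ΦB := by
          rw [hΦB]
          rcases lt_or_gt_of_ne hij with h | h
          · exact Or.inl ⟨i, j, h, Or.inr (Or.inr (Or.inl rfl))⟩
          · exact Or.inl ⟨j, i, h, Or.inr (Or.inr (Or.inl (add_comm _ _)))⟩
        constructor
        · intro hck
          have hdl : d _ < (k : ℕ) + 1 := (hLlt _ hmem k).mpr (fun l hl => by
            rw [happly_add]
            rcases eq_or_lt_of_le hl with he | hlt
            · have hlk : l = k := Fin.ext he.symm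
              rw [hlk, hck]; ring
            · rw [hτ l hlt]; ring)
          have hxk := (hx _ hmem).1 k hdl
          rw [happly_add] at hxk
          rw [neg_one_mul]
          exact eq_neg_of_add_eq_zero_left hxk
        · intro hck
          have he : (k : ℕ) + 1 = d _ := (hLeq _ hmem k).mpr
            ⟨fun l hl => by rw [happly_add, hτ l hl]; ring,
             by
              rw [happly_add]; intro h0
              exact hck (by rw [neg_one_mul]; exact eq_neg_of_add_eq_zero_left h0)⟩
          have hxk := (hx _ hmem).2 k he
          rw [happly_add] at hxk
          intro hcon
          apply hxk
          rw [neg_one_mul] at hcon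
          rw [hcon]; ring
  · intro hx α hα
    have hx' : ∀ (k : Fin p) (i j : Fin n) (σ : ℂ), WildCore.SGN σ →
        ((fun l : Fin p => if (k : ℕ) < (l : ℕ) then A l i else 0) =
          σ • (fun l : Fin p => if (k : ℕ) < (l : ℕ) then A l j else 0)) →
        (A k i = σ * A k j → x k i = σ * x k j) ∧
        (A k i ≠ σ * A k j → x k i ≠ σ * x k j) :=
      fun k i j σ hσ hτ => hx k i j σ hσ hτ
    have hα' := hα
    rw [hΦB] at hα
    have mkτ : ∀ (k : Fin p) (i j : Fin n) (σ : ℂ),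
        (∀ l : Fin p, (k : ℕ) < (l : ℕ) → A l i = σ * A l j) →
        (fun l : Fin p => if (k : ℕ) < (l : ℕ) then A l i else 0) =
          σ • (fun l : Fin p => if (k : ℕ) < (l : ℕ) then A l j else 0) := by
      intro k i j σ h
      funext l
      simp only [Pi.smul_apply, smul_eq_mul]
      split_ifs with hl
      · exact h l hl
      · ring
    rcases hα with ⟨i, j, hij, hcase⟩ | ⟨i, hi⟩
    · rcases hcase with rfl | rfl | rfl | rfl
      · constructor
        · intro k hk
          have hvan := (hLlt _ hα' k).mp hk
          have hS := hx' k i j 1 (Or.inl rfl) (mkτ k i j 1 (fun l hl => by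
            have h0 := hvan l (le_of_lt hl)
            rw [happly_sub, sub_eq_zero] at h0
            rw [one_mul]; exact h0))
          rw [happly_sub, sub_eq_zero]
          have h0 := hvan k (le_refl _)
          rw [happly_sub, sub_eq_zero] at h0
          simpa using hS.1 (by rw [one_mul]; exact h0)
        · intro k hk
          obtain ⟨hall, hknz⟩ := (hLeq _ hα' k).mp hk
          have hS := hx' k i j 1 (Or.inl rfl) (mkτ k i j 1 (fun l hl => by
            have h0 := hall l hl
            rw [happly_sub, sub_eq_zero] at h0
            rw [one_mul]; exact h0))
          rw [happly_sub] at hknz ⊢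
          intro h0
          exact hS.2 (fun hc => hknz (by rw [sub_eq_zero]; simpa using hc))
            (by rw [one_mul]; exact sub_eq_zero.mp h0)
      · constructor
        · intro k hk
          have hvan := (hLlt _ hα' k).mp hk
          have hS := hx' k j i 1 (Or.inl rfl) (mkτ k j i 1 (fun l hl => by
            have h0 := hvan l (le_of_lt hl)
            rw [happly_sub, sub_eq_zero] at h0
            rw [one_mul]; exact h0))
          rw [happly_sub, sub_eq_zero]
          have h0 := hvan k (le_refl _)
          rw [happly_sub, sub_eq_zero] at h0
          simpa using hS.1 (by rw [one_mul]; exact h0)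
        · intro k hk
          obtain ⟨hall, hknz⟩ := (hLeq _ hα' k).mp hk
          have hS := hx' k j i 1 (Or.inl rfl) (mkτ k j i 1 (fun l hl => by
            have h0 := hall l hl
            rw [happly_sub, sub_eq_zero] at h0
            rw [one_mul]; exact h0))
          rw [happly_sub] at hknz ⊢
          intro h0
          exact hS.2 (fun hc => hknz (by rw [sub_eq_zero]; simpa using hc))
            (by rw [one_mul]; exact sub_eq_zero.mp h0)
      · constructor
        · intro k hk
          have hvan := (hLlt _ hα' k).mp hk
          have hS := hx' k i j (-1) (Or.inr rfl) (mkτ k i j (-1) (fun l hl => by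
            have h0 := hvan l (le_of_lt hl)
            rw [happly_add] at h0
            rw [neg_one_mul]; exact eq_neg_of_add_eq_zero_left h0))
          have h0 := hvan k (le_refl _)
          rw [happly_add] at h0
          rw [happly_add]
          have hxx := hS.1 (by rw [neg_one_mul]; exact eq_neg_of_add_eq_zero_left h0)
          rw [neg_one_mul] at hxx
          rw [hxx]; ring
        · intro k hk
          obtain ⟨hall, hknz⟩ := (hLeq _ hα' k).mp hk
          have hS := hx' k i j (-1) (Or.inr rfl) (mkτ k i j (-1) (fun l hl => by
            have h0 := hall l hl
            rw [happly_add] at h0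
            rw [neg_one_mul]; exact eq_neg_of_add_eq_zero_left h0))
          rw [happly_add] at hknz ⊢
          intro h0
          apply hS.2 (fun hc => hknz (by rw [neg_one_mul] at hc; rw [hc]; ring))
          rw [neg_one_mul]
          exact eq_neg_of_add_eq_zero_left h0
      · constructor
        · intro k hk
          have hvan := (hLlt _ hα' k).mp hk
          have hS := hx' k i j (-1) (Or.inr rfl) (mkτ k i j (-1) (fun l hl => by
            have h0 := hvan l (le_of_lt hl)
            rw [happly_neg, neg_eq_zero] at h0
            rw [neg_one_mul]; exact eq_neg_of_add_eq_zero_left h0))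
          have h0 := hvan k (le_refl _)
          rw [happly_neg, neg_eq_zero] at h0
          rw [happly_neg, neg_eq_zero]
          have hxx := hS.1 (by rw [neg_one_mul]; exact eq_neg_of_add_eq_zero_left h0)
          rw [neg_one_mul] at hxx
          rw [hxx]; ring
        · intro k hk
          obtain ⟨hall, hknz⟩ := (hLeq _ hα' k).mp hk
          have hS := hx' k i j (-1) (Or.inr rfl) (mkτ k i j (-1) (fun l hl => by
            have h0 := hall l hl
            rw [happly_neg, neg_eq_zero] at h0
            rw [neg_one_mul]; exact eq_neg_of_add_eq_zero_left h0))
          rw [happly_neg] at hknz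
          rw [happly_neg]
          have hknz' : A k i ≠ -1 * A k j := fun hc => hknz (by rw [hc]; ring)
          intro h0
          have h1 : x k i + x k j = 0 := neg_eq_zero.mp h0
          exact hS.2 hknz' (by rw [neg_one_mul]; exact eq_neg_of_add_eq_zero_left h1)
    · subst hi
      constructor
      · intro k hk
        have hvan := (hLlt _ hα' k).mp hk
        have hS := hx' k i i (-1) (Or.inr rfl) (mkτ k i i (-1) (fun l hl => by
          have h0 := hvan l (le_of_lt hl)
          rw [happly] at h0
          rw [h0]; ring))
        have h0 := hvan k (le_refl _)
        rw [happly] at h0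
        rw [happly]
        have hxx := hS.1 (by rw [h0]; ring)
        rw [neg_one_mul] at hxx
        exact CharZero.eq_neg_self_iff.mp hxx
      · intro k hk
        obtain ⟨hall, hknz⟩ := (hLeq _ hα' k).mp hk
        have hS := hx' k i i (-1) (Or.inr rfl) (mkτ k i i (-1) (fun l hl => by
          have h0 := hall l hl
          rw [happly] at h0
          rw [h0]; ring))
        rw [happly] at hknz
        rw [happly]
        intro h0
        apply hS.2 (fun hc => hknz (by
          rw [neg_one_mul] at hc; exact CharZero.eq_neg_self_iff.mp hc))
        rw [h0]; ring


/-- Every pure local wild mapping class group of type B is a finite product of pure braid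
groups of types A and B/C. The `k`-th entry of a tuple `A' : Fin p → ℂ^n` represents the
coefficient `A'_{k+1}`. -/
theorem stmt14 (n p : ℕ) (hn : 1 ≤ n) (hp : 1 ≤ p)
    (A : Fin p → (Fin n → ℂ))
    (ΦB : Set ((Fin n → ℂ) →ₗ[ℂ] ℂ))
    (hΦB : ΦB = {α | ∃ i j : Fin n, i < j ∧ (α = prj n i - prj n j ∨ α = prj n j - prj n i ∨
        α = prj n i + prj n j ∨ α = -(prj n i + prj n j))} ∪ {α | ∃ i, α = prj n i})
    -- `d α` is the largest level (in `{1,…,p}`) with `α (A_k) ≠ 0` (`0` if all vanish):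
    (d : ((Fin n → ℂ) →ₗ[ℂ] ℂ) → ℕ)
    (hd : ∀ α ∈ ΦB, d α ≤ p ∧ (∀ k : Fin p, d α < (k : ℕ) + 1 → α (A k) = 0) ∧
      (1 ≤ d α → ∃ k : Fin p, (k : ℕ) + 1 = d α ∧ α (A k) ≠ 0))
    (BQ : Set (Fin p → (Fin n → ℂ)))
    (hBQ : BQ = {A' | ∀ α ∈ ΦB, (∀ k : Fin p, d α < (k : ℕ) + 1 → α (A' k) = 0) ∧
      ∀ k : Fin p, (k : ℕ) + 1 = d α → α (A' k) ≠ 0}) :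
    ∃ (hA : A ∈ BQ) (u v : ℕ) (a : Fin u → ℕ) (b : Fin v → ℕ)
      (cA : ∀ j : Fin u, Conf (a j)) (cB : ∀ l : Fin v, XBC (b l)),
      Nonempty (FundamentalGroup BQ ⟨A, hA⟩ ≃*
        ((∀ j : Fin u, FundamentalGroup (Conf (a j)) (cA j)) ×
          (∀ l : Fin v, FundamentalGroup (XBC (b l)) (cB l)))) := by
  classical
  have hA : A ∈ BQ := by
    rw [hBQ]
    intro α hα
    obtain ⟨hle, hvan, hex⟩ := hd α hα
    refine ⟨hvan, ?_⟩
    intro k hk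
    obtain ⟨k', hk', hne⟩ := hex (by omega)
    have hkk : k' = k := Fin.ext (by omega)
    rwa [← hkk]
  have hsplit := claimA n p A ΦB hΦB d hd BQ hBQ
  have hcore : ∀ k : Fin p, ∃ (J : Type) (_ : Fintype J) (mm : J → ℕ) (v : ℕ),
      Nonempty ({y : Fin n → ℂ // WildCore.Scond
        (fun (i : Fin n) (l : Fin p) => if (k : ℕ) < (l : ℕ) then A l i else 0)
        (fun i : Fin n => A k i) y} ≃ₜ ((∀ o : J, Conf (mm o)) × XBC v)) :=
    fun k => WildCore.core _ _
  choose J Jf mm v hcf using hcore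
  letI : ∀ k, Fintype (J k) := Jf
  have hcf' : ∀ k : Fin p, {y : Fin n → ℂ // WildCore.Scond
      (fun (i : Fin n) (l : Fin p) => if (k : ℕ) < (l : ℕ) then A l i else 0)
      (fun i : Fin n => A k i) y} ≃ₜ ((∀ o : J k, Conf (mm k o)) × XBC (v k)) :=
    fun k => (hcf k).some
  have H1 : ↥BQ ≃ₜ (∀ k : Fin p, {y : Fin n → ℂ // WildCore.Scond
      (fun (i : Fin n) (l : Fin p) => if (k : ℕ) < (l : ℕ) then A l i else 0)
      (fun i : Fin n => A k i) y}) :=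
    (Homeomorph.setCongr hsplit).trans (pisplit _)
  have H3 : ↥BQ ≃ₜ ((∀ k : Fin p, ∀ o : J k, Conf (mm k o)) × (∀ k : Fin p, XBC (v k))) :=
    (H1.trans (Homeomorph.piCongrRight hcf')).trans (piProdHomeo _ _)
  let E := Fintype.equivFin (Σ k : Fin p, J k)
  let u := Fintype.card (Σ k : Fin p, J k)
  let a : Fin u → ℕ := fun j => mm (E.symm j).1 (E.symm j).2
  have H4 : (∀ k : Fin p, ∀ o : J k, Conf (mm k o)) ≃ₜ
      (∀ s : (Σ k : Fin p, J k), Conf (mm s.1 s.2)) :=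
    (piSigmaHomeo (fun k o => Conf (mm k o))).symm
  have H5 : (∀ s : (Σ k : Fin p, J k), Conf (mm s.1 s.2)) ≃ₜ (∀ j : Fin u, Conf (a j)) :=
    (Homeomorph.piCongrLeft (Y := fun s : (Σ k : Fin p, J k) => Conf (mm s.1 s.2))
      E.symm).symm
  have Htot : ↥BQ ≃ₜ ((∀ j : Fin u, Conf (a j)) × (∀ k : Fin p, XBC (v k))) :=
    H3.trans (Homeomorph.prodCongr (H4.trans H5) (Homeomorph.refl _))
  obtain ⟨t0, e0⟩ := fgHomeo Htot ⟨A, hA⟩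
  refine ⟨hA, u, p, a, v, t0.1, t0.2, ⟨?_⟩⟩
  exact e0.trans ((fgProd _ _ t0.1 t0.2).trans
    (MulEquiv.prodCongr (fgPi _ t0.1) (fgPi _ t0.2)))
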